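/- There exist affine maps v i : ℝ² →ᵃ[ℝ] ℝ, i ∈ Fin 6, taking the prescribed values on the hexagon vertices: v i (s j) = 1 if j ∈ {i, i+1}, v i (s j) = 1/2 if j ∈ {i−1, i+2}, and v i (s j) = 0 if j ∈ {i+3, i+4} (all indices cyclic in Fin 6). -/

import Mathlib

noncomputable section

/-- The vertices of a regular hexagon in `ℝ²`. -/
def s (j : Fin 6) : ℝ × ℝ :=
  (Real.cos (((j : ℕ) + 1 : ℝ) * Real.pi / 3), Real.sin (((j : ℕ) + 1 : ℝ) * Real.pi / 3))

/-- The hexagon. -/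
def C : Set (ℝ × ℝ) := convexHull ℝ {s 0, s 1, s 2, s 3, s 4, s 5}

/-- The prescribed vertex values of the hexagon's extreme convex forms:
`v i (s j) = 1` if `j ∈ {i, i+1}`, `v i (s j) = 1/2` if `j ∈ {i-1, i+2}`, and
`v i (s j) = 0` if `j ∈ {i+3, i+4}` (indices cyclic in `Fin 6`). -/
def IsHexForms (v : Fin 6 → ((ℝ × ℝ) →ᵃ[ℝ] ℝ)) : Prop :=
  ∀ i : Fin 6,
    v i (s i) = 1 ∧ v i (s (i + 1)) = 1 ∧
    v i (s (i - 1)) = 1 / 2 ∧ v i (s (i + 2)) = 1 / 2 ∧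
    v i (s (i + 3)) = 0 ∧ v i (s (i + 4)) = 0

/-!
Take `v i := 1/2 + ⅓ ⟪s i + s (i + 1), ·⟫`. Since `⟪s a, s (a + k)⟫ = cos (k π / 3)`, the value of
`v i` at `s (i + k)` is `1/2 + (cos (k π / 3) + cos ((k - 1) π / 3)) / 3`, which runs through
`1, 1, 1/2, 0, 0, 1/2` for `k = 0, …, 5`.
-/

open Real

def dotForm {R : Type*} [CommSemiring R] (q : R × R) : (R × R) →ₗ[R] R :=
  q.1 • LinearMap.fst R R R + q.2 • LinearMap.snd R R R

@[simp]
lemma dotForm_apply {R : Type*} [CommSemiring R] (q p : R × R) :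
    dotForm q p = q.1 * p.1 + q.2 * p.2 := by
  simp [dotForm]

lemma dotForm_s_s_add (a k : Fin 6) : dotForm (s a) (s (a + k)) = cos (k * π / 3) := by
  -- the wrap-around of `a + k` in `Fin 6` costs a multiple of `2π` in the angle
  have hval : ((a + k : Fin 6) : ℕ) + 6 * (((a : ℕ) + k) / 6) = a + k := by
    rw [Fin.val_add]
    exact Nat.mod_add_div _ _
  have hangle : (((a + k : Fin 6) : ℕ) + 1 : ℝ) * π / 3 - ((a : ℕ) + 1 : ℝ) * π / 3
      = k * π / 3 - (((a : ℕ) + k) / 6 : ℕ) * (2 * π) := by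
    have hval' := congrArg (fun n : ℕ => (n : ℝ)) hval
    push_cast at hval'
    linear_combination (π / 3) * hval'
  simp only [dotForm_apply, s]
  rw [mul_comm (cos _), mul_comm (sin _), ← cos_sub, hangle, cos_sub_nat_mul_two_pi]

lemma cos_fin_six_mul_pi_div_three (k : Fin 6) :
    cos (k * π / 3) = ![1, 1 / 2, -(1 / 2), -1, -(1 / 2), 1 / 2] k := by
  have h2 : cos (2 * π / 3) = -(1 / 2) := by
    rw [show 2 * π / 3 = π - π / 3 by ring, cos_pi_sub, cos_pi_div_three]
  have h4 : cos (4 * π / 3) = -(1 / 2) := by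
    rw [show 4 * π / 3 = π / 3 + π by ring, cos_add_pi, cos_pi_div_three]
  have h5 : cos (5 * π / 3) = 1 / 2 := by
    rw [show 5 * π / 3 = 2 * π - π / 3 by ring, cos_two_pi_sub, cos_pi_div_three]
  fin_cases k <;> norm_num [h2, h4, h5]

def hexForm (i : Fin 6) : (ℝ × ℝ) →ᵃ[ℝ] ℝ :=
  ((1 / 3 : ℝ) • dotForm (s i + s (i + 1))).toAffineMap + AffineMap.const ℝ (ℝ × ℝ) (1 / 2 : ℝ)

lemma hexForm_apply_s_add (i k : Fin 6) :
    hexForm i (s (i + k)) = ![1, 1, 1 / 2, 0, 0, 1 / 2] k := by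
  have hsplit : hexForm i (s (i + k)) =
      1 / 2 + 1 / 3 * (dotForm (s i) (s (i + k)) + dotForm (s (i + 1)) (s (i + 1 + (k - 1)))) := by
    simp only [hexForm, AffineMap.coe_add, LinearMap.coe_toAffineMap, LinearMap.coe_smul,
      AffineMap.coe_const, Pi.add_apply, Pi.smul_apply, dotForm_apply, Prod.fst_add, Prod.snd_add,
      smul_eq_mul, Function.const_apply, add_add_sub_cancel]
    ring
  rw [hsplit, dotForm_s_s_add, dotForm_s_s_add, cos_fin_six_mul_pi_div_three,
    cos_fin_six_mul_pi_div_three]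
  fin_cases k <;> simp <;> norm_num

/-- There exist affine maps `v i : ℝ² →ᵃ[ℝ] ℝ` taking the prescribed values on the
hexagon vertices. -/
theorem exists_hexagon_forms : ∃ v : Fin 6 → ((ℝ × ℝ) →ᵃ[ℝ] ℝ), IsHexForms v := by
  refine ⟨hexForm, fun i => ?_⟩
  have h := hexForm_apply_s_add i
  have h5 : i - 1 = i + 5 := by rw [sub_eq_add_neg]; rfl
  exact ⟨by simpa using h 0, by simpa using h 1, by simpa [h5] using h 5, by simpa using h 2,
    by simpa using h 3, by simpa using h 4⟩
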